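/- (Singularity confinement for the Hietarinta–Viallet equation.) Let a ∈ ℂ, a ≠ 0, and x₀ ∈ ℂ, x₀ ≠ 0. For ε ∈ ℂ, ε ≠ 0, define sequences xₙ(ε), yₙ(ε) by x₀(ε) = x₀, y₀(ε) = ε, x_{n+1}(ε) = yₙ(ε), y_{n+1}(ε) = −xₙ(ε) + yₙ(ε) + a/yₙ(ε)². Then, as ε → 0 (with ε ≠ 0), x₅(ε) converges to x₀ and x₆(ε) converges to x₀ + a/x₀²; i.e., the singularity entered at y₀ = 0 is confined after finitely many steps and the initial value x₀ is recovered. -/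

import Mathlib

set_option maxHeartbeats 4000000
set_option maxRecDepth 10000

open Filter

/-- One step of the Hietarinta–Viallet map with parameter `a`:
`(x, y) ↦ (y, −x + y + a/y²)`. -/
noncomputable def hvStep (a : ℂ) (p : ℂ × ℂ) : ℂ × ℂ :=
  (p.2, -p.1 + p.2 + a / p.2 ^ 2)

/-- `hvx a x0 ε n` is `xₙ(ε)` for the orbit with `x₀(ε) = x0`, `y₀(ε) = ε`. -/
noncomputable def hvx (a x0 ε : ℂ) (n : ℕ) : ℂ :=
  ((hvStep a)^[n] (x0, ε)).1

noncomputable def pE (x e A : ℂ) : ℂ :=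
  A^24*x + 3*e*A^24 - 2*e^3*A^23*x - 21*e^4*A^23 - 6*e^6*A^22*x + 76*e^7*A^22 + 2*e^8*A^21*x^2 +
    48*e^9*A^21*x - 200*e^10*A^21 + 2*e^11*A^20*x^2 - 184*e^12*A^20*x + 434*e^13*A^20 -
    42*e^14*A^19*x^2 + 512*e^15*A^19*x + 3*e^16*A^18*x^3 - 812*e^16*A^19 + 191*e^17*A^18*x^2 -
    1149*e^18*A^18*x + 18*e^19*A^17*x^3 + 1339*e^19*A^18 - 587*e^20*A^17*x^2 + 2184*e^21*A^17*x -
    116*e^22*A^16*x^3 - 1973*e^22*A^17 + 1374*e^23*A^16*x^2 - 3601*e^24*A^16*x + 388*e^25*A^15*x^3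
    + 2619*e^25*A^16 - 2652*e^26*A^15*x^2 + 42*e^27*A^14*x^4 + 5238*e^27*A^15*x - 978*e^28*A^14*x^3
    - 3147*e^28*A^15 + 4370*e^29*A^14*x^2 - 170*e^30*A^13*x^4 - 6776*e^30*A^14*x +
    1916*e^31*A^13*x^3 + 3428*e^31*A^14 - 5*e^32*A^12*x^5 - 6213*e^32*A^13*x^2 + 445*e^33*A^12*x^4
    + 7818*e^33*A^13*x - 3110*e^34*A^12*x^3 - 3383*e^34*A^13 + 50*e^35*A^11*x^5 +
    7720*e^35*A^12*x^2 - 905*e^36*A^11*x^4 - 8061*e^36*A^12*x + 4280*e^37*A^11*x^3 + 3019*e^37*A^12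
    - 138*e^38*A^10*x^5 - 8414*e^38*A^11*x^2 + 1420*e^39*A^10*x^4 + 7414*e^39*A^11*x -
    7*e^40*A^9*x^6 - 5000*e^40*A^10*x^3 - 2426*e^40*A^11 + 278*e^41*A^9*x^5 + 8028*e^41*A^10*x^2 -
    1845*e^42*A^9*x^4 - 6054*e^42*A^10*x + 30*e^43*A^8*x^6 + 5020*e^43*A^9*x^3 + 1744*e^43*A^10 -
    432*e^44*A^8*x^5 - 6693*e^44*A^9*x^2 + 1990*e^45*A^8*x^4 + 4358*e^45*A^9*x - 56*e^46*A^7*x^6 -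
    4296*e^46*A^8*x^3 - 1111*e^46*A^9 + 504*e^47*A^7*x^5 + 4818*e^47*A^8*x^2 - 4*e^48*A^6*x^7 -
    1750*e^48*A^7*x^4 - 2728*e^48*A^8*x + 84*e^49*A^6*x^6 + 3080*e^49*A^7*x^3 + 618*e^49*A^8 -
    476*e^50*A^6*x^5 - 2940*e^50*A^7*x^2 + 8*e^51*A^5*x^7 + 1260*e^51*A^6*x^4 + 1456*e^51*A^7*x -
    84*e^52*A^5*x^6 - 1820*e^52*A^6*x^3 - 294*e^52*A^7 + 336*e^53*A^5*x^5 + 1484*e^53*A^6*x^2 -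
    8*e^54*A^4*x^7 - 700*e^54*A^5*x^4 - 644*e^54*A^6*x + 56*e^55*A^4*x^6 + 840*e^55*A^5*x^3 +
    116*e^55*A^6 - e^56*A^3*x^8 - 168*e^56*A^4*x^5 - 588*e^56*A^5*x^2 + 8*e^57*A^3*x^7 +
    280*e^57*A^4*x^4 + 224*e^57*A^5*x - 28*e^58*A^3*x^6 - 280*e^58*A^4*x^3 - 36*e^58*A^5 +
    56*e^59*A^3*x^5 + 168*e^59*A^4*x^2 - 70*e^60*A^3*x^4 - 56*e^60*A^4*x + 56*e^61*A^3*x^3 +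
    8*e^61*A^4 - 28*e^62*A^3*x^2 + 8*e^63*A^3*x - e^64*A^3

theorem hv_key (x e A a B C : ℂ) (hA : a = A + x*e^2 - e^3)
    (hB : B = A^3 - e^3*A^2 + a*e^6)
    (hC : C = (a*e^3 - A^2)*B^2 + a*e^3*A^6) :
    e^3*C^3 - B^3*C^2 + a*A^6*B^6 = e^2 * pE x e A := by
  subst hA hB hC
  unfold pE
  ring

/-- Combining the three fractions in one HV step. -/
theorem hv_frac (a u v Du Dv N D : ℂ) (hDu : Du ≠ 0) (hDv : Dv ≠ 0) (hv : v ≠ 0)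
    (hD : D ≠ 0)
    (h : (v*v^2 + Dv*(a*Dv^2))*Du - Dv*v^2*u = N*(Dv*v^2*Du)/D) :
    -(u/Du) + v/Dv + a/(v/Dv)^2 = N/D := by
  have hv2 : v^2 ≠ 0 := pow_ne_zero 2 hv
  have h1 : a/(v/Dv)^2 = a*Dv^2/v^2 := by rw [div_pow, div_div_eq_mul_div]
  rw [h1, neg_add_eq_sub, sub_add_eq_add_sub, div_add_div _ _ hDv hv2,
    div_sub_div _ _ (mul_ne_zero hDv hv2) hDu,
    div_eq_div_iff (mul_ne_zero (mul_ne_zero hDv hv2) hDu) hD, h]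
  exact div_mul_cancel₀ _ hD

noncomputable def fA (a x0 e : ℂ) : ℂ := a - x0*e^2 + e^3
noncomputable def fB (a x0 e : ℂ) : ℂ := (fA a x0 e)^3 - e^3*(fA a x0 e)^2 + a*e^6
noncomputable def fC (a x0 e : ℂ) : ℂ :=
  (a*e^3 - (fA a x0 e)^2)*(fB a x0 e)^2 + a*e^3*(fA a x0 e)^6
noncomputable def fE (a x0 e : ℂ) : ℂ := pE x0 e (fA a x0 e)

lemma contA (a x0 : ℂ) : Continuous (fun e => fA a x0 e) := by unfold fA; fun_prop
lemma contB (a x0 : ℂ) : Continuous (fun e => fB a x0 e) := by unfold fB fA; fun_prop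
lemma contC (a x0 : ℂ) : Continuous (fun e => fC a x0 e) := by unfold fC fB fA; fun_prop
lemma contE (a x0 : ℂ) : Continuous (fun e => fE a x0 e) := by unfold fE pE fA; fun_prop

lemma fA0 (a x0 : ℂ) : fA a x0 0 = a := by simp [fA]
lemma fB0 (a x0 : ℂ) : fB a x0 0 = a^3 := by simp [fB, fA]
lemma fC0 (a x0 : ℂ) : fC a x0 0 = -(a^8) := by simp [fC, fB, fA]; ring
lemma fE0 (a x0 : ℂ) : fE a x0 0 = x0*a^24 := by simp [fE, pE, fA]; ring

lemma orbit5 (a x0 e : ℂ) (he : e ≠ 0) (hA : fA a x0 e ≠ 0) (hB : fB a x0 e ≠ 0)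
    (hC : fC a x0 e ≠ 0) (hE : fE a x0 e ≠ 0) :
    (hvStep a)^[5] (x0, e) =
      (fE a x0 e / ((fA a x0 e)^2*(fB a x0 e)^2*(fC a x0 e)^2),
       fE a x0 e / ((fA a x0 e)^2*(fB a x0 e)^2*(fC a x0 e)^2)
         - e*fC a x0 e/((fA a x0 e)^2*(fB a x0 e)^2)
         + a*(fA a x0 e)^4*(fB a x0 e)^4*(fC a x0 e)^4/(fE a x0 e)^2) := by
  set A := fA a x0 e with hAdef
  set B := fB a x0 e with hBdef
  set C := fC a x0 e with hCdef
  set E := fE a x0 e with hEdef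
  have he2 : e^2 ≠ 0 := pow_ne_zero 2 he
  have hA2 : A^2 ≠ 0 := pow_ne_zero 2 hA
  have hB2 : B^2 ≠ 0 := pow_ne_zero 2 hB
  have hC2 : C^2 ≠ 0 := pow_ne_zero 2 hC
  have hD : e^3*C^3 - B^3*C^2 + a*A^6*B^6 = e^2 * E := by
    have h := hv_key x0 e A a B C (by rw [hAdef]; unfold fA; ring)
      (by rw [hBdef]; unfold fB; rw [← hAdef]) (by rw [hCdef]; unfold fC; rw [← hAdef, ← hBdef])
    rw [h, hEdef]; unfold fE; rw [← hAdef]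
  have e1 : hvStep a (x0, e) = (e, A / e^2) := by
    unfold hvStep
    simp only
    congr 1
    rw [hAdef]; unfold fA; field_simp; ring
  have e2 : hvStep a (e, A / e^2) = (A / e^2, B/(e^2*A^2)) := by
    unfold hvStep
    simp only
    congr 1
    rw [hBdef]; unfold fB; rw [← hAdef]; field_simp; ring
  have e3 : hvStep a (A / e^2, B/(e^2*A^2)) = (B/(e^2*A^2), e*C/(A^2*B^2)) := by
    unfold hvStep
    simp only
    congr 1
    have := hv_frac a A B (e^2) (e^2*A^2) (e*C) (A^2*B^2) he2 (mul_ne_zero he2 hA2) hB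
      (mul_ne_zero hA2 hB2) ?_
    · exact this
    · have hBe : B = A^3 - e^3*A^2 + a*e^6 := by
        rw [hBdef]; unfold fB; rw [← hAdef]
      have hCe : C = (a*e^3 - A^2)*B^2 + a*e^3*A^6 := by
        rw [hCdef]; unfold fC; rw [← hAdef, ← hBdef]
      rw [eq_div_iff (mul_ne_zero hA2 hB2)]
      linear_combination (e^2*A^2*B^4)*hBe - (e^5*A^2*B^2)*hCe
  have e4 : hvStep a (B/(e^2*A^2), e*C/(A^2*B^2)) = (e*C/(A^2*B^2), E/(A^2*B^2*C^2)) := by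
    unfold hvStep
    simp only
    congr 1
    have := hv_frac a B (e*C) (e^2*A^2) (A^2*B^2) E (A^2*B^2*C^2)
      (mul_ne_zero he2 hA2) (mul_ne_zero hA2 hB2) (mul_ne_zero he hC)
      (mul_ne_zero (mul_ne_zero hA2 hB2) hC2) ?_
    · exact this
    · rw [eq_div_iff (mul_ne_zero (mul_ne_zero hA2 hB2) hC2)]
      linear_combination (e^2*A^2*A^2*B^2*C^2) * hD
  have e5 : hvStep a (e*C/(A^2*B^2), E/(A^2*B^2*C^2)) =
      (E/(A^2*B^2*C^2), E/(A^2*B^2*C^2) - e*C/(A^2*B^2) + a*A^4*B^4*C^4/E^2) := by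
    unfold hvStep
    simp only
    congr 1
    have h1 : a/(E/(A^2*B^2*C^2))^2 = a*(A^2*B^2*C^2)^2/E^2 := by
      rw [div_pow, div_div_eq_mul_div]
    rw [h1]
    ring
  show (hvStep a) ((hvStep a) ((hvStep a) ((hvStep a) ((hvStep a) (x0, e))))) = _
  rw [e1, e2, e3, e4, e5]

/-- Singularity confinement for the Hietarinta–Viallet equation: as `ε → 0` (`ε ≠ 0`),
`x₅(ε) → x₀` and `x₆(ε) → x₀ + a/x₀²`; the singularity entered at `y₀ = 0` is confined
and the initial value `x₀` is recovered. -/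
theorem hv_singularity_confinement (a x0 : ℂ) (ha : a ≠ 0) (hx0 : x0 ≠ 0) :
    Tendsto (fun ε : ℂ => hvx a x0 ε 5) (nhdsWithin 0 {(0 : ℂ)}ᶜ) (nhds x0) ∧
    Tendsto (fun ε : ℂ => hvx a x0 ε 6) (nhdsWithin 0 {(0 : ℂ)}ᶜ)
      (nhds (x0 + a / x0 ^ 2)) := by
  set L := nhdsWithin (0:ℂ) {(0:ℂ)}ᶜ with hL
  have hLle : L ≤ nhds 0 := nhdsWithin_le_nhds
  have hε : ∀ᶠ e in L, e ≠ 0 := by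
    filter_upwards [self_mem_nhdsWithin] with e he
    simpa using he
  have hAne : ∀ᶠ e in L, fA a x0 e ≠ 0 :=
    (((contA a x0).continuousAt (x := 0)).eventually_ne (by simpa [fA0] using ha)).filter_mono hLle
  have hBne : ∀ᶠ e in L, fB a x0 e ≠ 0 :=
    (((contB a x0).continuousAt (x := 0)).eventually_ne
      (by simpa [fB0] using pow_ne_zero 3 ha)).filter_mono hLle
  have hCne : ∀ᶠ e in L, fC a x0 e ≠ 0 :=
    (((contC a x0).continuousAt (x := 0)).eventually_ne
      (by simpa [fC0] using pow_ne_zero 8 ha)).filter_mono hLle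
  have hEne : ∀ᶠ e in L, fE a x0 e ≠ 0 :=
    (((contE a x0).continuousAt (x := 0)).eventually_ne
      (by simpa [fE0] using mul_ne_zero hx0 (pow_ne_zero 24 ha))).filter_mono hLle
  have heq5 : ∀ᶠ e in L, fE a x0 e / ((fA a x0 e)^2*(fB a x0 e)^2*(fC a x0 e)^2)
      = hvx a x0 e 5 := by
    filter_upwards [hε, hAne, hBne, hCne, hEne] with e he hA hB hC hE
    unfold hvx
    rw [orbit5 a x0 e he hA hB hC hE]
  have heq6 : ∀ᶠ e in L, fE a x0 e / ((fA a x0 e)^2*(fB a x0 e)^2*(fC a x0 e)^2)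
         - e*fC a x0 e/((fA a x0 e)^2*(fB a x0 e)^2)
         + a*(fA a x0 e)^4*(fB a x0 e)^4*(fC a x0 e)^4/(fE a x0 e)^2
      = hvx a x0 e 6 := by
    filter_upwards [hε, hAne, hBne, hCne, hEne] with e he hA hB hC hE
    unfold hvx
    rw [show (6:ℕ) = 5+1 from rfl, Function.iterate_succ_apply',
      orbit5 a x0 e he hA hB hC hE]
    rfl
  have hA0 : Tendsto (fun e => fA a x0 e) L (nhds a) := by
    have := ((contA a x0).tendsto 0).mono_left hLle
    rwa [fA0] at this
  have hB0 : Tendsto (fun e => fB a x0 e) L (nhds (a^3)) := by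
    have := ((contB a x0).tendsto 0).mono_left hLle
    rwa [fB0] at this
  have hC0 : Tendsto (fun e => fC a x0 e) L (nhds (-(a^8))) := by
    have := ((contC a x0).tendsto 0).mono_left hLle
    rwa [fC0] at this
  have hE0 : Tendsto (fun e => fE a x0 e) L (nhds (x0*a^24)) := by
    have := ((contE a x0).tendsto 0).mono_left hLle
    rwa [fE0] at this
  have he0 : Tendsto (fun e : ℂ => e) L (nhds 0) := tendsto_id.mono_left hLle
  have hden : (a:ℂ)^2*(a^3)^2*(-(a^8))^2 ≠ 0 := by
    have h24 : (a:ℂ)^2*(a^3)^2*(-(a^8))^2 = a^24 := by ring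
    rw [h24]; exact pow_ne_zero 24 ha
  have hden2 : (a:ℂ)^2*(a^3)^2 ≠ 0 := by
    have h8 : (a:ℂ)^2*(a^3)^2 = a^8 := by ring
    rw [h8]; exact pow_ne_zero 8 ha
  have ht5 : Tendsto (fun e => fE a x0 e / ((fA a x0 e)^2*(fB a x0 e)^2*(fC a x0 e)^2))
      L (nhds x0) := by
    have h := hE0.div (((hA0.pow 2).mul (hB0.pow 2)).mul (hC0.pow 2)) hden
    have hval : x0*a^24 / (a^2*(a^3)^2*(-(a^8))^2) = x0 := by
      rw [show (a:ℂ)^2*(a^3)^2*(-(a^8))^2 = a^24 from by ring,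
        mul_div_assoc, div_self (pow_ne_zero 24 ha), mul_one]
    rwa [hval] at h
  have ht6 : Tendsto (fun e => fE a x0 e / ((fA a x0 e)^2*(fB a x0 e)^2*(fC a x0 e)^2)
         - e*fC a x0 e/((fA a x0 e)^2*(fB a x0 e)^2)
         + a*(fA a x0 e)^4*(fB a x0 e)^4*(fC a x0 e)^4/(fE a x0 e)^2)
      L (nhds (x0 + a/x0^2)) := by
    have h2 : Tendsto (fun e => e*fC a x0 e/((fA a x0 e)^2*(fB a x0 e)^2)) L (nhds 0) := by
      have h := (he0.mul hC0).div ((hA0.pow 2).mul (hB0.pow 2)) hden2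
      simp only [zero_mul, zero_div] at h; exact h
    have h3 : Tendsto
        (fun e => a*(fA a x0 e)^4*(fB a x0 e)^4*(fC a x0 e)^4/(fE a x0 e)^2)
        L (nhds (a/x0^2)) := by
      have hEne2 : (x0*a^24)^2 ≠ 0 :=
        pow_ne_zero 2 (mul_ne_zero hx0 (pow_ne_zero 24 ha))
      have h := (((tendsto_const_nhds (x := a)).mul (hA0.pow 4)).mul (hB0.pow 4)).mul
        (hC0.pow 4) |>.div (hE0.pow 2) hEne2
      have hval : a*a^4*(a^3)^4*(-(a^8))^4/(x0*a^24)^2 = a/x0^2 := by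
        rw [div_eq_div_iff hEne2 (pow_ne_zero 2 hx0)]
        ring
      rwa [hval] at h
    have h := (ht5.sub h2).add h3
    simpa using h
  exact ⟨ht5.congr' heq5, ht6.congr' heq6⟩
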